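/- Let k be a positive integer, let J_k be the k×k anti-diagonal matrix with all anti-diagonal entries 1, and let u_k be the k×k unitary matrix with entries (u_k)_{p,q} = √(2/(k+1)) ι^p sin(π p q/(k+1)). Then u_k^{-1} · J_k · u_k equals the k×k matrix whose (p,q) entry is ι^{k-1} · (-1)^{k-p} if q = k+1-p, and 0 otherwise. -/
import Mathlib

open Finset Complex
open scoped Matrix


/-- The `k × k` matrix `u_k` with `(p,q)` entry `√(2/(k+1)) ιᵖ sin(π p q/(k+1))`,
for `p, q ∈ {1, …, k}` (here indexed by `Fin k`, so `p` corresponds to `(p : ℕ) + 1`). -/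
noncomputable def umat (k : ℕ) : Matrix (Fin k) (Fin k) ℂ :=
  Matrix.of fun p q =>
    (Real.sqrt (2 / ((k : ℝ) + 1)) : ℂ) * Complex.I ^ ((p : ℕ) + 1) *
      ((Real.sin (Real.pi * ((p : ℕ) + 1) * ((q : ℕ) + 1) / ((k : ℝ) + 1)) : ℝ) : ℂ)

/-- The `k × k` anti-diagonal matrix `J_k` with all anti-diagonal entries 1. -/
noncomputable def antidiag (k : ℕ) : Matrix (Fin k) (Fin k) ℂ :=
  Matrix.of fun i j => if (i : ℕ) + (j : ℕ) + 1 = k then 1 else 0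

lemma geom_aux (k : ℕ) (z : ℂ) (hz1 : z ≠ 1) (hz : z ^ (2*k+2) = 1) :
    ∑ p ∈ Finset.range k, (z ^ (p+1) + z⁻¹ ^ (p+1)) = -z^(k+1) - 1 := by
  have hz0 : z ≠ 0 := by
    intro h; rw [h, zero_pow (by omega)] at hz; exact zero_ne_one hz
  have hG : (∑ i ∈ Finset.range (2*k+1), z^i) = -z^(2*k+1) := by
    have h1 := geom_sum_mul z (2*k+1)
    have h2 : (-z^(2*k+1)) * (z - 1) = z^(2*k+1) - 1 := by
      have h3 : z^(2*k+2) = z^(2*k+1) * z := by rw [← pow_succ]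
      linear_combination -hz + h3
    exact mul_right_cancel₀ (sub_ne_zero.mpr hz1) (h1.trans h2.symm)
  have hsplit : (∑ i ∈ Finset.range (2*k+1), z^i)
      = (∑ p ∈ Finset.range k, z ^ p) + ((∑ p ∈ Finset.range k, z ^ (k+p+1)) + z^k) := by
    have : 2*k+1 = k + (k+1) := by omega
    rw [this, Finset.sum_range_add, Finset.sum_range_succ']
    simp only [Nat.add_assoc, Nat.add_zero]
  have hmul : z^k * (∑ p ∈ Finset.range k, (z ^ (p+1) + z⁻¹ ^ (p+1)))
      = z^k * (-z^(k+1) - 1) := by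
    rw [Finset.mul_sum]
    have hterm : ∀ p ∈ Finset.range k,
        z^k * (z ^ (p+1) + z⁻¹ ^ (p+1)) = z^(k+p+1) + z^(k-1-p) := by
      intro p hp
      rw [Finset.mem_range] at hp
      have e1 : z^k * z^(p+1) = z^(k+p+1) := by rw [← pow_add, Nat.add_assoc]
      have e2 : z^k * z⁻¹^(p+1) = z^(k-1-p) := by
        have : z^k = z^(k-1-p) * z^(p+1) := by
          rw [← pow_add]
          congr 1
          omega
        rw [this, mul_assoc, ← mul_pow, mul_inv_cancel₀ hz0, one_pow, mul_one]
      rw [mul_add, e1, e2]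
    rw [Finset.sum_congr rfl hterm, Finset.sum_add_distrib]
    have hrefl : ∑ p ∈ Finset.range k, z^(k-1-p) = ∑ p ∈ Finset.range k, z^p := by
      rw [← Finset.sum_range_reflect]
      exact Finset.sum_congr rfl fun p hp => by
        rw [Finset.mem_range] at hp; congr 1; omega
    rw [hrefl]
    have : (∑ p ∈ Finset.range k, z ^ (k+p+1)) + ∑ p ∈ Finset.range k, z^p
        = (∑ i ∈ Finset.range (2*k+1), z^i) - z^k := by
      rw [hsplit]; ring
    rw [this, hG]
    ring
  exact mul_left_cancel₀ (pow_ne_zero k hz0) hmul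

lemma cos_sum (k m : ℕ) (hm : 0 < m) (hm2 : m < 2*k+2) :
    ∑ p ∈ Finset.range k, ((Real.cos (Real.pi * m * (p+1) / (k+1)) : ℝ) : ℂ)
      = (-(-1)^m - 1)/2 := by
  have hk1 : ((k:ℝ)+1) ≠ 0 := by positivity
  set θ : ℝ := Real.pi * m / (k+1) with hθ
  set z : ℂ := Complex.exp (θ * Complex.I) with hzdef
  have hzpow : ∀ n : ℕ, z ^ n = Complex.exp ((n * θ : ℝ) * Complex.I) := by
    intro n
    rw [hzdef, ← Complex.exp_nat_mul]
    push_cast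
    ring_nf
  have hz : z ^ (2*k+2) = 1 := by
    rw [hzpow]
    have : ((2*k+2 : ℕ) * θ : ℝ) = (m : ℝ) * (2 * Real.pi) := by
      rw [hθ]; push_cast; field_simp
    rw [this]
    push_cast
    rw [show ((m:ℂ) * (2 * (Real.pi:ℂ)) * Complex.I) = (m:ℂ) * (2 * Real.pi * Complex.I) by ring]
    exact Complex.exp_nat_mul_two_pi_mul_I m
  have hz1 : z ≠ 1 := by
    intro h
    rw [hzdef, Complex.exp_eq_one_iff] at h
    obtain ⟨n, hn⟩ := h
    have hn2 : (θ:ℂ) * Complex.I = ((n:ℂ) * (2*Real.pi)) * Complex.I := by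
      linear_combination hn
    have hn' : (θ : ℂ) = (n : ℂ) * (2 * Real.pi) :=
      mul_right_cancel₀ Complex.I_ne_zero hn2
    have hnr : θ = (n : ℝ) * (2 * Real.pi) := by exact_mod_cast hn'
    rw [hθ] at hnr
    have hpi := Real.pi_pos
    have : (m : ℝ) = (n : ℝ) * (2 * ((k:ℝ)+1)) := by
      field_simp at hnr
      nlinarith [hnr]
    have hZ : (m : ℤ) = n * (2 * ((k:ℤ)+1)) := by exact_mod_cast this
    have h1 : (0:ℤ) < (m:ℤ) := by exact_mod_cast hm
    have h2 : (m:ℤ) < 2*(k:ℤ)+2 := by exact_mod_cast hm2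
    rcases le_or_gt n 0 with h | h
    · nlinarith [mul_nonneg (neg_nonneg.mpr h) (show (0:ℤ) ≤ 2*((k:ℤ)+1) by positivity)]
    · nlinarith [mul_le_mul_of_nonneg_right (show (1:ℤ) ≤ n from h) (show (0:ℤ) ≤ 2*((k:ℤ)+1) by positivity)]
  have hzk1 : z ^ (k+1) = (-1)^m := by
    rw [hzpow]
    have : ((k+1 : ℕ) * θ : ℝ) = (m : ℝ) * Real.pi := by
      rw [hθ]; push_cast; field_simp
    rw [this]
    push_cast
    rw [show ((m:ℂ) * (Real.pi:ℂ) * Complex.I) = (m:ℂ) * ((Real.pi:ℂ) * Complex.I) by ring,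
      Complex.exp_nat_mul, Complex.exp_pi_mul_I]
  have hgeom := geom_aux k z hz1 hz
  have hterm : ∀ p ∈ Finset.range k,
      ((Real.cos (Real.pi * m * (p+1) / (k+1)) : ℝ) : ℂ) = (z ^ (p+1) + z⁻¹ ^ (p+1)) / 2 := by
    intro p _
    have harg : (Real.pi * m * (p+1) / (k+1) : ℝ) = ((p+1 : ℕ) * θ : ℝ) := by
      rw [hθ]; push_cast; field_simp
    rw [harg, Complex.ofReal_cos]
    have h2c := Complex.two_cos (x := ((((p:ℕ)+1 : ℕ) * θ : ℝ) : ℂ))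
    rw [← hzpow] at h2c
    have hneg : Complex.exp (-((((p:ℕ)+1 : ℕ) * θ : ℝ) : ℂ) * Complex.I) = z⁻¹ ^ (p+1) := by
      rw [neg_mul, Complex.exp_neg, ← hzpow, inv_pow]
    rw [hneg] at h2c
    linear_combination h2c / 2
  rw [Finset.sum_congr rfl hterm, ← Finset.sum_div, hgeom, hzk1]

lemma two_sin_mul_sin (a b : ℝ) :
    2 * Real.sin a * Real.sin b = Real.cos (a-b) - Real.cos (a+b) := by
  have h := Real.cos_sub_cos (a-b) (a+b)
  simp only [show ((a-b)+(a+b))/2 = a by ring, show ((a-b)-(a+b))/2 = -b by ring,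
    Real.sin_neg] at h
  linarith

lemma unitary_aux (k : ℕ) (q q' : Fin k) (hle : (q':ℕ) ≤ (q:ℕ)) :
    ∑ p : Fin k, star (umat k p q) * umat k p q' = if q = q' then 1 else 0 := by
  have hk1 : ((k:ℝ)+1) ≠ 0 := by positivity
  have hkC : ((k:ℂ)+1) ≠ 0 := by exact_mod_cast hk1
  set c : ℝ := 2/((k:ℝ)+1) with hc
  set d : ℕ := (q:ℕ) - (q':ℕ) with hd
  set s : ℕ := (q:ℕ) + (q':ℕ) + 2 with hs
  have key : ∀ p : Fin k, star (umat k p q) * umat k p q'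
      = (c:ℂ)/2 * (((Real.cos (Real.pi * (d:ℝ) * (((p:ℕ):ℝ)+1) / ((k:ℝ)+1)) : ℝ) : ℂ)
        - ((Real.cos (Real.pi * (s:ℝ) * (((p:ℕ):ℝ)+1) / ((k:ℝ)+1)) : ℝ) : ℂ)) := by
    intro p
    simp only [umat, Matrix.of_apply, star_mul', star_pow, Complex.star_def,
      Complex.conj_ofReal, Complex.conj_I]
    set A : ℝ := Real.pi * (((p:ℕ):ℝ) + 1) * (((q:ℕ):ℝ) + 1) / ((k:ℝ) + 1) with hA
    set B : ℝ := Real.pi * (((p:ℕ):ℝ) + 1) * (((q':ℕ):ℝ) + 1) / ((k:ℝ) + 1) with hB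
    have hsq : ((Real.sqrt c : ℝ) : ℂ) * ((Real.sqrt c : ℝ) : ℂ) = (c:ℝ) := by
      rw [← Complex.ofReal_mul, Real.mul_self_sqrt (by positivity)]
    have hIP : (-Complex.I)^((p:ℕ)+1) * Complex.I^((p:ℕ)+1) = 1 := by
      rw [← mul_pow, neg_mul, Complex.I_mul_I, neg_neg, one_pow]
    have hargd : A - B = Real.pi * (d:ℝ) * (((p:ℕ):ℝ)+1) / ((k:ℝ)+1) := by
      rw [hA, hB, hd]
      rw [Nat.cast_sub hle]
      field_simp
      ring
    have hargs : A + B = Real.pi * (s:ℝ) * (((p:ℕ):ℝ)+1) / ((k:ℝ)+1) := by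
      rw [hA, hB, hs]
      push_cast
      field_simp
      ring
    have htrig : 2 * Real.sin A * Real.sin B
        = Real.cos (Real.pi * (d:ℝ) * (((p:ℕ):ℝ)+1) / ((k:ℝ)+1))
          - Real.cos (Real.pi * (s:ℝ) * (((p:ℕ):ℝ)+1) / ((k:ℝ)+1)) := by
      rw [← hargd, ← hargs]; exact two_sin_mul_sin A B
    have htrigC : 2 * ((Real.sin A : ℝ):ℂ) * ((Real.sin B : ℝ):ℂ)
        = ((Real.cos (Real.pi * (d:ℝ) * (((p:ℕ):ℝ)+1) / ((k:ℝ)+1)) : ℝ) : ℂ)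
          - ((Real.cos (Real.pi * (s:ℝ) * (((p:ℕ):ℝ)+1) / ((k:ℝ)+1)) : ℝ) : ℂ) := by
      exact_mod_cast congrArg (fun x : ℝ => (x : ℂ)) htrig
    linear_combination ((-Complex.I)^((p:ℕ)+1) * Complex.I^((p:ℕ)+1)
        * ((Real.sin A : ℝ):ℂ) * ((Real.sin B : ℝ):ℂ)) * hsq
      + ((c:ℂ) * ((Real.sin A : ℝ):ℂ) * ((Real.sin B : ℝ):ℂ)) * hIP
      + ((c:ℂ)/2) * htrigC
  rw [Finset.sum_congr rfl (fun p _ => key p)]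
  rw [← Finset.mul_sum, Finset.sum_sub_distrib,
    Fin.sum_univ_eq_sum_range (fun n : ℕ =>
      ((Real.cos (Real.pi * (d:ℝ) * ((n:ℝ)+1) / ((k:ℝ)+1)) : ℝ) : ℂ)) k,
    Fin.sum_univ_eq_sum_range (fun n : ℕ =>
      ((Real.cos (Real.pi * (s:ℝ) * ((n:ℝ)+1) / ((k:ℝ)+1)) : ℝ) : ℂ)) k]
  have hs1 : 0 < s := by omega
  have hs2 : s < 2*k+2 := by omega
  have hsum_s := cos_sum k s hs1 hs2
  rw [hsum_s]
  by_cases hqq : q = q'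
  · subst hqq
    have hd0 : d = 0 := by omega
    have hsum_d : (∑ p ∈ Finset.range k,
        ((Real.cos (Real.pi * (d:ℝ) * ((p:ℝ)+1) / ((k:ℝ)+1)) : ℝ) : ℂ)) = (k:ℂ) := by
      rw [hd0]
      simp
    rw [hsum_d, if_pos rfl]
    have hpar : ((-1:ℂ))^s = 1 := by
      rw [show s = 2*((q:ℕ)+1) by omega, pow_mul]
      norm_num
    rw [hpar, hc]
    push_cast
    field_simp
    ring
  · have hd1 : 0 < d := by
      rcases Nat.lt_or_ge (q':ℕ) (q:ℕ) with h | h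
      · omega
      · exact absurd (Fin.ext (le_antisymm h hle)) hqq
    have hd2 : d < 2*k+2 := by have := q.isLt; omega
    rw [cos_sum k d hd1 hd2, if_neg hqq]
    have hpar : ((-1:ℂ))^d = (-1:ℂ)^s := by
      have hds : d + s = 2*((q:ℕ)+1) := by omega
      have h1 : ((-1:ℂ))^d * (-1:ℂ)^s = 1 := by
        rw [← pow_add, hds, pow_mul]; norm_num
      have h2 : ((-1:ℂ))^s * (-1:ℂ)^s = 1 := by
        rw [← pow_add, ← two_mul, pow_mul]; norm_num
      have hne : ((-1:ℂ))^s ≠ 0 := pow_ne_zero _ (by norm_num)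
      exact mul_right_cancel₀ hne (h1.trans h2.symm)
    rw [hpar]
    ring

lemma umat_unitary (k : ℕ) : (umat k)ᴴ * umat k = 1 := by
  ext q q'
  rw [Matrix.mul_apply, Matrix.one_apply]
  simp only [Matrix.conjTranspose_apply]
  rcases le_total (q':ℕ) (q:ℕ) with h | h
  · exact unitary_aux k q q' h
  · have h2 := unitary_aux k q' q h
    have hst : ∑ p : Fin k, star (umat k p q) * umat k p q'
        = star (∑ p : Fin k, star (umat k p q') * umat k p q) := by
      rw [star_sum]
      exact Finset.sum_congr rfl fun p _ => by rw [star_mul, star_star]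
    rw [hst, h2]
    by_cases hqq : q = q'
    · subst hqq; simp
    · rw [if_neg (fun h' => hqq h'.symm), if_neg hqq, star_zero]

noncomputable def dmat (k : ℕ) : Matrix (Fin k) (Fin k) ℂ :=
  Matrix.of fun p q : Fin k =>
    if (p : ℕ) + (q : ℕ) + 1 = k then
      Complex.I ^ (k - 1) * (-1) ^ (k - 1 - (p : ℕ))
    else 0

lemma Ipow_id (k : ℕ) (hk : 0 < k) (p : ℕ) (hp : p < k) :
    Complex.I^(k-p) = Complex.I^(p+1) * (-1:ℂ)^p * Complex.I^(k-1) := by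
  have hne : (Complex.I)^(p+1) ≠ 0 := pow_ne_zero _ Complex.I_ne_zero
  apply mul_right_cancel₀ hne
  have h1 : Complex.I^(k-p) * Complex.I^(p+1) = Complex.I^(k+1) := by
    rw [← pow_add]; congr 1; omega
  have h2 : Complex.I^(k+1) = -Complex.I^(k-1) := by
    rw [show k+1 = (k-1)+2 by omega, pow_add, Complex.I_sq]; ring
  have hpp : Complex.I^(p+1) * Complex.I^(p+1) = (-1:ℂ)^(p+1) := by
    rw [← pow_add, ← two_mul, pow_mul, Complex.I_sq]
  have hodd : (-1:ℂ)^p * (-1:ℂ)^(p+1) = -1 := by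
    rw [← pow_add]; exact Odd.neg_one_pow ⟨p, by ring⟩
  have h3 : (Complex.I^(p+1) * (-1:ℂ)^p * Complex.I^(k-1)) * Complex.I^(p+1)
      = -Complex.I^(k-1) := by
    calc (Complex.I^(p+1) * (-1:ℂ)^p * Complex.I^(k-1)) * Complex.I^(p+1)
        = ((-1:ℂ)^p * (Complex.I^(p+1) * Complex.I^(p+1))) * Complex.I^(k-1) := by ring
      _ = ((-1:ℂ)^p * (-1:ℂ)^(p+1)) * Complex.I^(k-1) := by rw [hpp]
      _ = -Complex.I^(k-1) := by rw [hodd]; ring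
  rw [h1, h2, h3]

lemma antidiag_mul_umat (k : ℕ) (hk : 0 < k) : antidiag k * umat k = umat k * dmat k := by
  ext p q
  rw [Matrix.mul_apply, Matrix.mul_apply]
  have hp : (p:ℕ) < k := p.isLt
  have hq : (q:ℕ) < k := q.isLt
  set r0 : Fin k := ⟨k-1-(p:ℕ), by omega⟩ with hr0
  set r1 : Fin k := ⟨k-1-(q:ℕ), by omega⟩ with hr1
  have hL : ∑ r : Fin k, antidiag k p r * umat k r q = umat k r0 q := by
    have hterm : ∀ r : Fin k, antidiag k p r * umat k r q
        = if r = r0 then umat k r q else 0 := by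
      intro r
      by_cases h : (p:ℕ) + (r:ℕ) + 1 = k
      · rw [if_pos (Fin.ext (show (r:ℕ) = (r0:ℕ) by simp [hr0]; omega))]
        simp [antidiag, h]
      · rw [if_neg (fun hr => h (by subst hr; simp [hr0]; omega))]
        simp [antidiag, h]
    rw [Finset.sum_congr rfl (fun r _ => hterm r)]
    simp
  have hR : ∑ r : Fin k, umat k p r * dmat k r q
      = umat k p r1 * (Complex.I ^ (k - 1) * (-1) ^ ((q:ℕ))) := by
    have hterm : ∀ r : Fin k, umat k p r * dmat k r q
        = if r = r1 then umat k p r * (Complex.I ^ (k - 1) * (-1) ^ ((q:ℕ))) else 0 := by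
      intro r
      by_cases h : (r:ℕ) + (q:ℕ) + 1 = k
      · rw [if_pos (Fin.ext (show (r:ℕ) = (r1:ℕ) by simp [hr1]; omega))]
        have hval : k - 1 - (r:ℕ) = (q:ℕ) := by omega
        simp [dmat, h, hval]
      · rw [if_neg (fun hr => h (by subst hr; simp [hr1]; omega))]
        simp [dmat, h]
    rw [Finset.sum_congr rfl (fun r _ => hterm r)]
    simp
  rw [hL, hR]
  simp only [umat, Matrix.of_apply]
  have e0 : (r0:ℕ) + 1 = k - (p:ℕ) := by simp [hr0]; omega
  have e1 : (r1:ℕ) + 1 = k - (q:ℕ) := by simp [hr1]; omega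
  have e0r : ((r0:ℕ):ℝ) + 1 = ((k - (p:ℕ) : ℕ):ℝ) := by exact_mod_cast congrArg (Nat.cast : ℕ → ℝ) e0
  have e1r : ((r1:ℕ):ℝ) + 1 = ((k - (q:ℕ) : ℕ):ℝ) := by exact_mod_cast congrArg (Nat.cast : ℕ → ℝ) e1
  rw [e0, e1r, e0r]
  have hs1 : Real.sin (Real.pi * ((k - (p:ℕ):ℕ):ℝ) * (((q:ℕ):ℝ)+1) / ((k:ℝ)+1))
      = -((-1:ℝ)^((q:ℕ)+1) * Real.sin (Real.pi * (((p:ℕ):ℝ)+1) * (((q:ℕ):ℝ)+1) / ((k:ℝ)+1))) := by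
    rw [show Real.pi * ((k - (p:ℕ):ℕ):ℝ) * (((q:ℕ):ℝ)+1) / ((k:ℝ)+1)
        = (((q:ℕ)+1 : ℕ):ℝ) * Real.pi - Real.pi * (((p:ℕ):ℝ)+1) * (((q:ℕ):ℝ)+1) / ((k:ℝ)+1) by
      rw [Nat.cast_sub (le_of_lt hp)]
      push_cast
      field_simp
      ring]
    rw [Real.sin_nat_mul_pi_sub]
  have hs2 : Real.sin (Real.pi * (((p:ℕ):ℝ)+1) * ((k - (q:ℕ):ℕ):ℝ) / ((k:ℝ)+1))
      = -((-1:ℝ)^((p:ℕ)+1) * Real.sin (Real.pi * (((p:ℕ):ℝ)+1) * (((q:ℕ):ℝ)+1) / ((k:ℝ)+1))) := by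
    rw [show Real.pi * (((p:ℕ):ℝ)+1) * ((k - (q:ℕ):ℕ):ℝ) / ((k:ℝ)+1)
        = (((p:ℕ)+1 : ℕ):ℝ) * Real.pi - Real.pi * (((p:ℕ):ℝ)+1) * (((q:ℕ):ℝ)+1) / ((k:ℝ)+1) by
      rw [Nat.cast_sub (le_of_lt hq)]
      push_cast
      field_simp
      ring]
    rw [Real.sin_nat_mul_pi_sub]
  rw [hs1, hs2, Ipow_id k hk (p:ℕ) hp]
  push_cast
  ring

/-- Conjugating `J_k` by the unitary matrix `u_k` gives the anti-diagonal matrix whose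
`(p, k+1-p)` entry is `ι^{k-1} (-1)^{k-p}` (in 1-based indexing). -/
theorem umat_conj_antidiag (k : ℕ) (hk : 0 < k) :
    (umat k)⁻¹ * antidiag k * umat k =
      Matrix.of fun p q : Fin k =>
        if (p : ℕ) + (q : ℕ) + 1 = k then
          Complex.I ^ (k - 1) * (-1) ^ (k - 1 - (p : ℕ))
        else 0 := by
  have hu := umat_unitary k
  have hinv : (umat k)⁻¹ = (umat k)ᴴ := Matrix.inv_eq_left_inv hu
  calc (umat k)⁻¹ * antidiag k * umat k
      = (umat k)ᴴ * (antidiag k * umat k) := by rw [hinv, Matrix.mul_assoc]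
    _ = (umat k)ᴴ * (umat k * dmat k) := by rw [antidiag_mul_umat k hk]
    _ = ((umat k)ᴴ * umat k) * dmat k := by rw [Matrix.mul_assoc]
    _ = dmat k := by rw [hu, Matrix.one_mul]
    _ = _ := rfl
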